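/- Let R be a ring and n ≥ 1 an integer. Suppose that for every countably generated right R-submodule T of the right R-module Rⁿ (column vectors), every R-linear map T → Rⁿ extends to an R-linear map Rⁿ → Rⁿ. Then the matrix ring Mₙ(R) is right ℵ₀-injective. -/

import Mathlib

/-!
Fix a column index `i₀` and view `v ∈ Rⁿ` as the matrix `v e_{i₀}ᵀ`. A right ideal `I` of
`Mₙ(R)` gives the right `R`-submodule `T = {v | v e_{i₀}ᵀ ∈ I}` of `Rⁿ`. Since `x e_{j i₀}` has the
`j`-th column of `x` as its column `i₀`, `T` contains every column of every element of `I`, so it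
is generated by the columns of any generating set of `I`. A right `Mₙ(R)`-linear `f : I → Mₙ(R)`
induces `T → Rⁿ`, `v ↦` column `i₀` of `f (v e_{i₀}ᵀ)`; an extension of this map to `Rⁿ` is left
multiplication by some matrix `G`, and comparing columns shows that left multiplication by `G`
extends `f`.
-/

open Matrix MulOpposite

section

variable {R : Type*} [Ring R] {ι : Type*} [DecidableEq ι]

theorem LinearMap.exists_eq_mulVec [Fintype ι] {m : Type*} (g : (ι → R) →ₗ[Rᵐᵒᵖ] (m → R)) :
    ∃ G : Matrix m ι R, ∀ v, g v = G *ᵥ v := by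
  refine ⟨of fun i j => g (Pi.single j 1) i, fun v => ?_⟩
  suffices g = mulVecBilin R Rᵐᵒᵖ (of fun i j => g (Pi.single j 1) i) from
    LinearMap.congr_fun this v
  refine LinearMap.pi_ext fun j r => ?_
  have : Pi.single j r = op r • (Pi.single j 1 : ι → R) := by
    rw [← Pi.single_smul', op_smul_eq_mul, one_mul]
  rw [mulVecBilin_apply, mulVec_single, this, map_smul]
  rfl

namespace Matrix

def singleCol (i₀ : ι) (v : ι → R) : Matrix ι ι R := vecMulVec v (Pi.single i₀ 1)

variable (i₀ : ι)

@[simp]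
theorem col_singleCol_self (v : ι → R) : (singleCol i₀ v).col i₀ = v := by
  ext i; simp [singleCol, col_apply, vecMulVec_apply]

theorem singleCol_add (v w : ι → R) : singleCol i₀ (v + w) = singleCol i₀ v + singleCol i₀ w :=
  add_vecMulVec v w _

variable [Fintype ι]

theorem singleCol_op_smul (r : R) (v : ι → R) :
    singleCol i₀ (op r • v) = op (diagonal fun _ : ι => r) • singleCol i₀ v := by
  ext i j
  by_cases hj : j = i₀ <;> simp [singleCol, vecMulVec_apply, hj]

theorem singleCol_col (x : Matrix ι ι R) (j : ι) :
    singleCol i₀ (x.col j) = op (single j i₀ (1 : R)) • x := by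
  ext i k
  by_cases hk : k = i₀ <;>
    simp [singleCol, vecMulVec_apply, hk, col_apply, mul_single_apply_of_ne]

theorem col_op_smul (B x : Matrix ι ι R) (j : ι) :
    (op B • x).col j = ∑ k, op (B k j) • x.col k := by
  rw [op_smul_eq_mul]
  exact mulVec_eq_sum (B.col j) x

theorem col_op_diagonal_smul (r : R) (x : Matrix ι ι R) (j : ι) :
    (op (diagonal fun _ : ι => r) • x).col j = op r • x.col j := by
  ext i; simp [col_apply]

theorem col_op_single_smul (x : Matrix ι ι R) (j : ι) :
    (op (single j i₀ (1 : R)) • x).col i₀ = x.col j := by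
  ext i; simp [col_apply]

variable (I : Submodule (Matrix ι ι R)ᵐᵒᵖ (Matrix ι ι R))

def colSubmodule : Submodule Rᵐᵒᵖ (ι → R) where
  carrier := {v | singleCol i₀ v ∈ I}
  add_mem' {v w} hv hw := by
    simpa only [Set.mem_ofPred_eq, singleCol_add] using add_mem hv hw
  zero_mem' := by simp [singleCol]
  smul_mem' r v hv := by
    induction r using MulOpposite.rec'
    simpa only [Set.mem_ofPred_eq, singleCol_op_smul] using I.smul_mem _ hv

variable {i₀ I}

@[simp]
theorem mem_colSubmodule {v : ι → R} : v ∈ colSubmodule i₀ I ↔ singleCol i₀ v ∈ I := Iff.rfl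

theorem col_mem_colSubmodule {x : Matrix ι ι R} (hx : x ∈ I) (j : ι) :
    x.col j ∈ colSubmodule i₀ I := by
  rw [mem_colSubmodule, singleCol_col]
  exact I.smul_mem _ hx

theorem col_mem_span_cols {S : Set (Matrix ι ι R)} {x : Matrix ι ι R}
    (hx : x ∈ Submodule.span (Matrix ι ι R)ᵐᵒᵖ S) (j : ι) :
    x.col j ∈ Submodule.span Rᵐᵒᵖ (⋃ k, (col · k) '' S) := by
  induction hx using Submodule.span_induction generalizing j with
  | mem s hs => exact Submodule.subset_span (Set.mem_iUnion.2 ⟨j, s, hs, rfl⟩)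
  | zero => exact zero_mem _
  | add x y _ _ hx hy => exact add_mem (hx j) (hy j)
  | smul B x _ hx =>
    induction B using MulOpposite.rec'
    rw [col_op_smul]
    exact Submodule.sum_mem _ fun k _ => Submodule.smul_mem _ _ (hx k)

theorem span_cols_eq_colSubmodule {S : Set (Matrix ι ι R)}
    (hS : Submodule.span (Matrix ι ι R)ᵐᵒᵖ S = I) :
    Submodule.span Rᵐᵒᵖ (⋃ k, (col · k) '' S) = colSubmodule i₀ I := by
  refine le_antisymm (Submodule.span_le.2 ?_) fun v hv => ?_
  · rintro _ ⟨_, ⟨k, rfl⟩, s, hs, rfl⟩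
    exact col_mem_colSubmodule (hS ▸ Submodule.subset_span hs) k
  · simpa using col_mem_span_cols (hS ▸ hv : singleCol i₀ v ∈ _) i₀

variable (i₀) in
def colRestrict (f : I →ₗ[(Matrix ι ι R)ᵐᵒᵖ] Matrix ι ι R) :
    colSubmodule i₀ I →ₗ[Rᵐᵒᵖ] (ι → R) where
  toFun v := (f ⟨singleCol i₀ v, v.2⟩).col i₀
  map_add' v w := by
    have : (⟨singleCol i₀ (v + w : colSubmodule i₀ I), (v + w).2⟩ : I) = ⟨_, v.2⟩ + ⟨_, w.2⟩ :=
      Subtype.ext (singleCol_add ..)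
    simp only [this, map_add]
    rfl
  map_smul' r v := by
    induction r using MulOpposite.rec' with | _ r
    have : (⟨singleCol i₀ (op r • v : colSubmodule i₀ I), (op r • v).2⟩ : I) =
        op (diagonal fun _ : ι => r) • ⟨_, v.2⟩ :=
      Subtype.ext (singleCol_op_smul ..)
    simp only [this, map_smul, col_op_diagonal_smul, RingHom.id_apply]

theorem colRestrict_col (f : I →ₗ[(Matrix ι ι R)ᵐᵒᵖ] Matrix ι ι R) (x : I) (j : ι) :
    colRestrict i₀ f ⟨(x : Matrix ι ι R).col j, col_mem_colSubmodule x.2 j⟩ = (f x).col j := by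
  have : (⟨singleCol i₀ ((x : Matrix ι ι R).col j), col_mem_colSubmodule x.2 j⟩ : I) =
      op (single j i₀ (1 : R)) • x :=
    Subtype.ext (singleCol_col ..)
  simp only [colRestrict, LinearMap.coe_mk, AddHom.coe_mk, this, map_smul, col_op_single_smul]

end Matrix

end

/-- A ring `R` is *right ℵ₀-injective* if every homomorphism of right `R`-modules
from a countably generated right ideal of `R` to `R` extends to a homomorphism of
right `R`-modules `R → R`. -/
def IsRightAleph0Injective (R : Type*) [Ring R] : Prop :=
  ∀ I : Submodule Rᵐᵒᵖ R,
    (∃ S : Set R, S.Countable ∧ Submodule.span Rᵐᵒᵖ S = I) →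
    ∀ f : I →ₗ[Rᵐᵒᵖ] R, ∃ g : R →ₗ[Rᵐᵒᵖ] R, ∀ x : I, g (x : R) = f x

/-- Let `R` be a ring and `n ≥ 1`. If every right `R`-linear map from a countably
generated right `R`-submodule `T` of `Rⁿ` to `Rⁿ` extends to a right `R`-linear
map `Rⁿ → Rⁿ`, then the matrix ring `Mₙ(R)` is right ℵ₀-injective. -/
theorem matrix_isRightAleph0Injective_of_extend (R : Type*) [Ring R]
    (n : ℕ) (hn : 1 ≤ n)
    (h : ∀ T : Submodule Rᵐᵒᵖ (Fin n → R),
      (∃ S : Set (Fin n → R), S.Countable ∧ Submodule.span Rᵐᵒᵖ S = T) →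
      ∀ f : T →ₗ[Rᵐᵒᵖ] (Fin n → R),
        ∃ g : (Fin n → R) →ₗ[Rᵐᵒᵖ] (Fin n → R), ∀ x : T, g (x : Fin n → R) = f x) :
    IsRightAleph0Injective (Matrix (Fin n) (Fin n) R) := by
  let i₀ : Fin n := ⟨0, hn⟩
  rintro I ⟨S, hSc, hSI⟩ f
  obtain ⟨g, hg⟩ := h (colSubmodule i₀ I)
    ⟨_, Set.countable_iUnion fun k => hSc.image (col · k), span_cols_eq_colSubmodule hSI⟩
    (colRestrict i₀ f)
  obtain ⟨G, hG⟩ := g.exists_eq_mulVec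
  refine ⟨DistribSMul.toLinearMap _ _ G, fun x => ?_⟩
  ext i j
  calc (G * x) i j = (G *ᵥ (x : Matrix (Fin n) (Fin n) R).col j) i := rfl
    _ = (f x).col j i := by rw [← hG, hg ⟨_, col_mem_colSubmodule x.2 j⟩, colRestrict_col]
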